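/- arXiv:2106.04805 — 3 statements merged into one kernel-verified Lean document; each statement's English description precedes it below -/
import Mathlib

section
/- Fix n ∈ ℕ+ and subsets 𝒰_t ⊆ [n] for each t ∈ [n]. For S ⊆ {0,1,…,n} let 1_S ∈ ℝ^{n+1} denote the indicator vector (entries indexed by 0,…,n), and for S₁,S₂ ⊆ {0,…,n} let Q(S₁,S₂) = 1_{S₁}·1_{S₂}ᵀ ∈ ℝ^{(n+1)×(n+1)}. Define A_t = Q(𝒰_t, {0}∪𝒰_t) + ((|𝒰_t|+1)/t)·Q({0}, {0}∪𝒰_t), and A_{t₁,t₂} = Q(𝒰_{t₁}, {0}∪𝒰_{t₂}) + ((|𝒰_{t₁}|+1)/t₁)·Q({0}, {0}∪𝒰_{t₂}). Then for any indices n ≥ t_m > t_{m−1} > ⋯ > t₁ ≥ 1, the matrix product satisfies A_{t_m}·A_{t_{m−1}}⋯A_{t₁} = [ ∏_{k=1}^{m−1} ( (|𝒰_{t_k}|+1)/t_k + |𝒰_{t_k} ∩ 𝒰_{t_{k+1}}| ) ] · A_{t_m, t₁}. -/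
open Finset

noncomputable section

/-- The indicator (column) vector of a set of indices `S ⊆ {0,…,n}`. -/
def indVec (n : ℕ) (S : Finset (Fin (n + 1))) : Fin (n + 1) → ℝ :=
  fun i => if i ∈ S then 1 else 0

/-- The rank-one 0/1 matrix `Q(S₁,S₂) = 1_{S₁} · 1_{S₂}ᵀ`. -/
def QMat (n : ℕ) (S₁ S₂ : Finset (Fin (n + 1))) :
    Matrix (Fin (n + 1)) (Fin (n + 1)) ℝ :=
  Matrix.of fun i j => indVec n S₁ i * indVec n S₂ j

/-- `A_t = Q(𝒰_t, {0}∪𝒰_t) + ((|𝒰_t|+1)/t)·Q({0}, {0}∪𝒰_t)`. -/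
def AMat (n : ℕ) (U : ℕ → Finset (Fin (n + 1))) (t : ℕ) :
    Matrix (Fin (n + 1)) (Fin (n + 1)) ℝ :=
  QMat n (U t) (insert 0 (U t)) +
    ((((U t).card : ℝ) + 1) / (t : ℝ)) • QMat n {0} (insert 0 (U t))

/-- `A_{t₁,t₂} = Q(𝒰_{t₁}, {0}∪𝒰_{t₂}) + ((|𝒰_{t₁}|+1)/t₁)·Q({0}, {0}∪𝒰_{t₂})`. -/
def AMat2 (n : ℕ) (U : ℕ → Finset (Fin (n + 1))) (t₁ t₂ : ℕ) :
    Matrix (Fin (n + 1)) (Fin (n + 1)) ℝ :=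
  QMat n (U t₁) (insert 0 (U t₂)) +
    ((((U t₁).card : ℝ) + 1) / (t₁ : ℝ)) • QMat n {0} (insert 0 (U t₂))

lemma QMat_mul (n : ℕ) (S₁ S₂ S₃ S₄ : Finset (Fin (n + 1))) :
    QMat n S₁ S₂ * QMat n S₃ S₄ = ((S₂ ∩ S₃).card : ℝ) • QMat n S₁ S₄ := by
  ext i j
  simp only [Matrix.mul_apply, QMat, indVec, Matrix.smul_apply, Matrix.of_apply, smul_eq_mul]
  have : ∀ x : Fin (n+1),
      ((if i ∈ S₁ then (1:ℝ) else 0) * if x ∈ S₂ then 1 else 0) *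
        ((if x ∈ S₃ then (1:ℝ) else 0) * if j ∈ S₄ then 1 else 0) =
      (if x ∈ S₂ ∩ S₃ then (1:ℝ) else 0) *
        ((if i ∈ S₁ then (1:ℝ) else 0) * if j ∈ S₄ then 1 else 0) := by
    intro x
    by_cases h2 : x ∈ S₂ <;> by_cases h3 : x ∈ S₃ <;> simp [h2, h3]
  rw [Finset.sum_congr rfl fun x _ => this x, ← Finset.sum_mul,
    Finset.sum_ite_mem, Finset.univ_inter, Finset.sum_const, nsmul_eq_mul, mul_one]

lemma AMat2_mul_AMat (n : ℕ) (U : ℕ → Finset (Fin (n + 1)))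
    (hU : ∀ t, (0 : Fin (n + 1)) ∉ U t) (t b a : ℕ) :
    AMat2 n U t b * AMat n U a =
      ((((U a).card : ℝ) + 1) / (a : ℝ) + ((U a ∩ U b).card : ℝ)) • AMat2 n U t a := by
  have h1 : insert (0 : Fin (n+1)) (U b) ∩ U a = U b ∩ U a := by
    rw [Finset.insert_inter_of_notMem (hU a)]
  have h2 : insert (0 : Fin (n+1)) (U b) ∩ {0} = {0} := by
    simp [Finset.inter_eq_right]
  simp only [AMat2, AMat, Matrix.add_mul, Matrix.mul_add, Matrix.smul_mul, Matrix.mul_smul,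
    QMat_mul, h1, h2, Finset.card_singleton, Nat.cast_one, one_smul, smul_add, smul_smul]
  rw [Finset.inter_comm (U b) (U a)]
  module

/-- **Matrix product identity** (Lemma on products of range-of-action matrices).
For subsets `𝒰_t ⊆ [n] = {1,…,n}` (i.e. not containing the index `0`) and indices
`n ≥ t_m > ⋯ > t₁ ≥ 1` (here given as a strictly increasing `ts : Fin (m+1) → ℕ`),
`A_{t_m} ⋯ A_{t₁} = (∏_{k=1}^{m-1} ((|𝒰_{t_k}|+1)/t_k + |𝒰_{t_k} ∩ 𝒰_{t_{k+1}}|)) · A_{t_m,t₁}`. -/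
theorem AMat_prod (n m : ℕ) (U : ℕ → Finset (Fin (n + 1)))
    (hU : ∀ t, (0 : Fin (n + 1)) ∉ U t)
    (ts : Fin (m + 1) → ℕ) (hmono : StrictMono ts)
    (h1 : 1 ≤ ts 0) (hn : ts (Fin.last m) ≤ n) :
    (List.ofFn fun k : Fin (m + 1) => AMat n U (ts k)).reverse.prod =
      (∏ k : Fin m,
          ((((U (ts (Fin.castSucc k))).card : ℝ) + 1) / (ts (Fin.castSucc k) : ℝ) +
            ((U (ts (Fin.castSucc k)) ∩ U (ts (Fin.succ k))).card : ℝ))) •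
        AMat2 n U (ts (Fin.last m)) (ts 0) := by
  induction m with
  | zero =>
    simp [AMat, AMat2]
  | succ m ih =>
    have hts' : StrictMono (ts ∘ Fin.succ) := hmono.comp fun _ _ h => Fin.succ_lt_succ_iff.mpr h
    have h1' : 1 ≤ (ts ∘ Fin.succ) 0 := le_trans h1 (hmono.monotone (Fin.zero_le _))
    have hn' : (ts ∘ Fin.succ) (Fin.last m) ≤ n := by
      simpa [Function.comp, Fin.succ_last] using hn
    have ihx := ih (ts ∘ Fin.succ) hts' h1' hn'
    have hlist : (List.ofFn fun k : Fin (m + 2) => AMat n U (ts k)) =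
        AMat n U (ts 0) :: List.ofFn fun k : Fin (m + 1) => AMat n U ((ts ∘ Fin.succ) k) := by
      rw [List.ofFn_succ]; rfl
    rw [hlist, List.reverse_cons, List.prod_append, List.prod_cons, List.prod_nil, mul_one,
      ihx, Matrix.smul_mul]
    simp only [Function.comp] at *
    rw [AMat2_mul_AMat n U hU ((ts (Fin.last m).succ)) (ts (Fin.succ 0)) (ts 0)]
    rw [smul_smul, Fin.prod_univ_succ]
    rw [Fin.succ_last]
    congr 1
    rw [mul_comm]
    simp only [Fin.succ_castSucc, Fin.castSucc_zero]


end
end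

section
/- Let G(n) be the graph of the StSSBM(n,k,a,b) model, fix a vertex v, an integer R ∈ ℕ+, and constants L > 0, C > 0, and let V_{2R}^n(v) denote the set of vertices at graph distance at most 2R from v in G(n). Then limsup_{n→∞} Σ_{m=1}^∞ ( 2^m L^m C^m / (m−1)! ) · E[ |V_{2R}^n(v)|^m ] < ∞. -/
open MeasureTheory Finset

noncomputable section
open scoped Classical

/-- Unordered pairs of distinct vertices, represented by ordered pairs with increasing
coordinates: the potential edges of a graph on `Fin n`. -/
abbrev EdgeIdx (n : ℕ) := {p : Fin n × Fin n // p.1 < p.2}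

variable {n : ℕ}

/-- The time (in `{1, …, n}`) at which vertex `v` arrives, given the arrival
order `σ` (`σ ⟨t-1⟩` is the vertex arriving at time `t`). -/
def arrivalTime (σ : Equiv.Perm (Fin n)) (v : Fin n) : ℕ := (σ.symm v : ℕ) + 1

/-- The graph `G(t)`: the subgraph of `G(n)` (encoded by the indicator `E` of present
edges) induced by the vertices that have arrived by time `t`. -/
def graphAt (E : EdgeIdx n → Bool) (σ : Equiv.Perm (Fin n)) (t : ℕ) :
    SimpleGraph (Fin n) where
  Adj u v := u ≠ v ∧ arrivalTime σ u ≤ t ∧ arrivalTime σ v ≤ t ∧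
    ∃ p : EdgeIdx n, E p = true ∧
      ((p.1.1 = u ∧ p.1.2 = v) ∨ (p.1.1 = v ∧ p.1.2 = u))
  symm := by
    constructor
    rintro u v ⟨h1, h2, h3, p, hp, hor⟩
    exact ⟨h1.symm, h3, h2, p, hp, hor.symm⟩
  loopless := by
    constructor
    rintro v ⟨h1, -⟩
    exact h1 rfl

/-- `V_R^t(v)`: the ball of radius `R` around `v` in the graph `G(t)`. -/
def ballSet (E : EdgeIdx n → Bool) (σ : Equiv.Perm (Fin n)) (t R : ℕ) (v : Fin n) :
    Set (Fin n) :=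
  {u | (graphAt E σ t).Reachable v u ∧ (graphAt E σ t).dist v u ≤ R}

/-- `V_R^t(v)` as a finite set. -/
def ballFinset (E : EdgeIdx n → Bool) (σ : Equiv.Perm (Fin n)) (t R : ℕ) (v : Fin n) :
    Finset (Fin n) :=
  Finset.univ.filter (· ∈ ballSet E σ t R v)

/-- The accessible vertex set `𝒱_v^t` (with locality radius `R`):
`𝒱_v^0 = {v}`, and when vertex `v(t+1) = σ ⟨t⟩` arrives, every vertex in the
radius-`R` ball around `v(t+1)` in `G(t+1)` pools the accessible sets of all
vertices of that ball. -/
def accSet (E : EdgeIdx n → Bool) (σ : Equiv.Perm (Fin n)) (R : ℕ) :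
    ℕ → Fin n → Set (Fin n)
  | 0, v => {v}
  | t + 1, v =>
    if h : t < n then
      if v ∈ ballSet E σ (t + 1) R (σ ⟨t, h⟩) then
        ⋃ v' ∈ ballSet E σ (t + 1) R (σ ⟨t, h⟩), accSet E σ R t v'
      else accSet E σ R t v
    else accSet E σ R t v

/-- A full configuration of the streaming SBM with side information:
true labels, noisy labels, edge indicators, and the arrival order. -/
abbrev ConfigS (n k : ℕ) :=
  (Fin n → Fin k) × (Fin n → Fin k) × (EdgeIdx n → Bool) × Equiv.Perm (Fin n)

/-- A configuration of the streaming SBM without side information. -/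
abbrev Config (n k : ℕ) :=
  (Fin n → Fin k) × (EdgeIdx n → Bool) × Equiv.Perm (Fin n)

/-- The probability that the potential edge `p` is present, given the labels:
`a/n` within communities and `b/n` across. -/
def edgeP (k : ℕ) (a b : ℝ) (τ : Fin n → Fin k) (p : EdgeIdx n) : ℝ :=
  if τ p.1.1 = τ p.1.2 then a / n else b / n

/-- The probability mass of a configuration of `StSSBM(n,k,a,b,α)`
(with side information). -/
def densityS (k : ℕ) (a b α : ℝ) (c : ConfigS n k) : ℝ :=
  ((1 : ℝ) / (k : ℝ) ^ n) * ((1 : ℝ) / (Nat.factorial n : ℝ)) *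
    (∏ v : Fin n, if c.2.1 v = c.1 v then 1 - α else α / ((k : ℝ) - 1)) *
    (∏ p : EdgeIdx n,
      if c.2.2.1 p then edgeP k a b c.1 p else 1 - edgeP k a b c.1 p)

/-- The probability mass of a configuration of `StSSBM(n,k,a,b)`
(no side information). -/
def density (k : ℕ) (a b : ℝ) (c : Config n k) : ℝ :=
  ((1 : ℝ) / (k : ℝ) ^ n) * ((1 : ℝ) / (Nat.factorial n : ℝ)) *
    ∏ p : EdgeIdx n,
      if c.2.1 p then edgeP k a b c.1 p else 1 - edgeP k a b c.1 p

end

/-!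
Explore the ball `V_r(v)` breadth first. The BFS tree is encoded layer by layer, each layer
being the sphere at the next distance together with a parent map into the previous sphere, and
all `|V_r(v)| - 1` tree edges must be present in the graph. Each edge is present independently
with probability at most `p = max a b / n`, so summing over codes,
`E[exp (t |V_r(v)|)] ≤ e^t ∑_w (e^t p)^{size w}`. With `β = e^t p`, the sum of `β ^ size` over the
codes of depth `q` hanging from a root set `A` is at most `T_q ^ |A|`, where `T_0 = 1` and
`T_{q+1} = exp (n β T_q) = exp (max a b · e^t · T_q)`: a bound independent of `n`. Finally
`x ^ (m+1) ≤ (m+1)! / t^(m+1) · e^{t x}` dominates the moment series by a convergent series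
times this exponential moment.
-/

namespace SimpleGraph

variable {V : Type*} {G : SimpleGraph V}

theorem reachable_and_dist_le_iff {v u : V} {r : ℕ} :
    G.Reachable v u ∧ G.dist v u ≤ r ↔ G.edist v u ≤ r := by
  constructor
  · rintro ⟨hvu, hd⟩
    rw [← hvu.coe_dist_eq_edist]
    exact_mod_cast hd
  · intro hd
    have hvu := edist_ne_top_iff_reachable.1 (ne_top_of_le_ne_top (ENat.natCast_ne_top r) hd)
    rw [← hvu.coe_dist_eq_edist] at hd
    exact ⟨hvu, by exact_mod_cast hd⟩

variable [Fintype V]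

variable (G) in
noncomputable def sphere (v : V) (ℓ : ℕ) : Finset V :=
  univ.filter fun u => G.edist v u = ℓ

@[simp]
theorem mem_sphere {v u : V} {ℓ : ℕ} : u ∈ G.sphere v ℓ ↔ G.edist v u = ℓ := by
  simp [sphere]

@[simp]
theorem sphere_zero (v : V) : G.sphere v 0 = {v} := by
  ext u
  simp [edist_eq_zero_iff, eq_comm (a := u)]

theorem sphere_disjoint {v : V} {i j : ℕ} (hij : i ≠ j) :
    Disjoint (G.sphere v i) (G.sphere v j) :=
  Finset.disjoint_left.2 fun u hi hj => hij <| by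
    rw [mem_sphere] at hi hj
    exact_mod_cast hi.symm.trans hj

theorem exists_adj_of_mem_sphere_succ {v u : V} {ℓ : ℕ} (hu : u ∈ G.sphere v (ℓ + 1)) :
    ∃ w ∈ G.sphere v ℓ, G.Adj w u := by
  obtain ⟨p, hp⟩ := exists_walk_of_edist_eq_coe (mem_sphere.1 hu)
  have hrev : p.reverse.length = ℓ + 1 := p.length_reverse.trans hp
  cases hq : p.reverse with
  | nil => simp [hq] at hrev
  | @cons _ w _ hadj q =>
    have hlen : q.length = ℓ := by simpa [hq] using hrev
    refine ⟨w, mem_sphere.2 (le_antisymm ?_ ?_), hadj.symm⟩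
    · simpa [hlen, edist_comm] using edist_le q
    · have := G.edist_triangle (u := v) (v := w) (w := u)
      rw [mem_sphere.1 hu, edist_eq_one_iff_adj.2 hadj.symm] at this
      exact (ENat.add_le_add_iff_right ENat.one_ne_top).1 (by simpa using this)

variable (G) in
open Classical in
noncomputable def bfsParent (v : V) (ℓ : ℕ) (u : V) : V :=
  if hu : u ∈ G.sphere v (ℓ + 1) then (exists_adj_of_mem_sphere_succ hu).choose else u

theorem bfsParent_mem_sphere {v u : V} {ℓ : ℕ} (hu : u ∈ G.sphere v (ℓ + 1)) :
    G.bfsParent v ℓ u ∈ G.sphere v ℓ := by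
  rw [bfsParent, dif_pos hu]
  exact (exists_adj_of_mem_sphere_succ hu).choose_spec.1

theorem adj_bfsParent {v u : V} {ℓ : ℕ} (hu : u ∈ G.sphere v (ℓ + 1)) :
    G.Adj (G.bfsParent v ℓ u) u := by
  rw [bfsParent, dif_pos hu]
  exact (exists_adj_of_mem_sphere_succ hu).choose_spec.2

theorem bfsParent_of_notMem {v u : V} {ℓ : ℕ} (hu : u ∉ G.sphere v (ℓ + 1)) :
    G.bfsParent v ℓ u = u := by
  rw [bfsParent, dif_neg hu]

end SimpleGraph

/-- A BFS layer: the vertices at the next distance, with a parent map into the previous layer.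
Parent maps are normalised to the identity off the layer, so that the layers on `S` hanging
from `A` correspond to the maps `S → A`. -/
abbrev Layer (V : Type*) := Finset V × (V → V)

namespace Layer

variable {V : Type*} [Fintype V] [DecidableEq V]

def HangsFrom (A : Finset V) (l : Layer V) : Prop :=
  ∀ u, if u ∈ l.1 then l.2 u ∈ A else l.2 u = u

instance (A : Finset V) : DecidablePred (HangsFrom A) := fun l => by
  unfold HangsFrom; infer_instance

theorem card_filter_hangsFrom (A S : Finset V) :
    #{π : V → V | HangsFrom A (S, π)} = #A ^ #S := by
  have : ({π : V → V | HangsFrom A (S, π)} : Finset _) =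
      Fintype.piFinset fun u => if u ∈ S then A else {u} := by
    ext π
    simp only [HangsFrom, mem_filter, mem_univ, true_and, Fintype.mem_piFinset]
    refine forall_congr' fun u => ?_
    split_ifs <;> simp
  simp only [this, Fintype.card_piFinset, apply_ite card, card_singleton, prod_ite_mem,
    univ_inter, prod_const]

theorem sum_hangsFrom_pow (A : Finset V) (x : ℝ) :
    ∑ l : Layer V with HangsFrom A l, x ^ #l.1 = (#A * x + 1) ^ Fintype.card V := by
  rw [← Fintype.sum_pow_mul_eq_add_pow, sum_filter, Fintype.sum_prod_type]
  refine sum_congr rfl fun S _ => ?_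
  rw [← sum_filter]
  dsimp only
  rw [sum_const, card_filter_hangsFrom, nsmul_eq_mul]
  push_cast
  ring

end Layer

def codeSize {V : Type*} (w : List (Layer V)) : ℕ := (w.map fun l => #l.1).sum

@[simp]
theorem codeSize_nil {V : Type*} : codeSize ([] : List (Layer V)) = 0 := rfl

@[simp]
theorem codeSize_cons {V : Type*} (l : Layer V) (w : List (Layer V)) :
    codeSize (l :: w) = #l.1 + codeSize w := by
  simp [codeSize]

noncomputable def tower (γ : ℝ) : ℕ → ℝ
  | 0 => 1
  | q + 1 => Real.exp (γ * tower γ q)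

theorem tower_nonneg (γ : ℝ) : ∀ q, 0 ≤ tower γ q
  | 0 => zero_le_one
  | _ + 1 => (Real.exp_pos _).le

section ForestCodes

variable {V : Type*} [Fintype V] [DecidableEq V]

/-- Codes of rooted forests of depth `q` with root set `A`, listed layer by layer. -/
def forestCodes : ℕ → Finset V → Finset (List (Layer V))
  | 0, _ => {[]}
  | q + 1, A =>
    ({l : Layer V | l.HangsFrom A} : Finset _).biUnion fun l => (forestCodes q l.1).image (l :: ·)

theorem sum_pow_codeSize_le {β γ : ℝ} (hβ : 0 ≤ β) (hγ : Fintype.card V * β ≤ γ) (q : ℕ)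
    (A : Finset V) : ∑ w ∈ forestCodes q A, β ^ codeSize w ≤ tower γ q ^ #A := by
  induction q generalizing A with
  | zero => simp [forestCodes, tower]
  | succ q ih =>
    have hT := tower_nonneg γ q
    rw [forestCodes, sum_biUnion]
    · calc ∑ l : Layer V with l.HangsFrom A,
            ∑ w ∈ (forestCodes q l.1).image (l :: ·), β ^ codeSize w
          = ∑ l : Layer V with l.HangsFrom A,
            β ^ #l.1 * ∑ w ∈ forestCodes q l.1, β ^ codeSize w := by
            refine sum_congr rfl fun l _ => ?_
            rw [sum_image fun _ _ _ _ h => List.cons_injective h, mul_sum]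
            simp [pow_add]
        _ ≤ ∑ l : Layer V with l.HangsFrom A, (β * tower γ q) ^ #l.1 := by
            gcongr with l
            rw [mul_pow]
            exact mul_le_mul_of_nonneg_left (ih l.1) (by positivity)
        _ = (#A * (β * tower γ q) + 1) ^ Fintype.card V := Layer.sum_hangsFrom_pow A _
        _ ≤ Real.exp (#A * (β * tower γ q)) ^ Fintype.card V := by
            gcongr
            linarith [Real.add_one_le_exp (#A * (β * tower γ q))]
        _ ≤ tower γ (q + 1) ^ #A := by
            rw [← Real.exp_nat_mul, tower, ← Real.exp_nat_mul, Real.exp_le_exp]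
            calc (Fintype.card V : ℝ) * (#A * (β * tower γ q))
                = #A * (Fintype.card V * β) * tower γ q := by ring
              _ ≤ #A * γ * tower γ q := by gcongr
              _ = #A * (γ * tower γ q) := by ring
    · intro l _ l' _ hne
      simp only [Function.onFun, disjoint_left, mem_image]
      rintro _ ⟨w, -, rfl⟩ ⟨w', -, h⟩
      exact hne (List.cons_eq_cons.1 h).1.symm

end ForestCodes

open Classical in
noncomputable def codeEdges {V : Type*} [Fintype V] (w : List (Layer V)) : Finset (Sym2 V) :=
  {e | ∃ l ∈ w, ∃ u ∈ l.1, s(u, l.2 u) = e}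

theorem mem_codeEdges {V : Type*} [Fintype V] {w : List (Layer V)} {e : Sym2 V} :
    e ∈ codeEdges w ↔ ∃ l ∈ w, ∃ u ∈ l.1, s(u, l.2 u) = e := by
  simp [codeEdges]

namespace SimpleGraph

variable {V : Type*} [Fintype V] (G : SimpleGraph V)

noncomputable def bfsLayer (v : V) (i : ℕ) : Layer V := (G.sphere v (i + 1), G.bfsParent v i)

/-- The BFS layers `j + 1, …, j + q` around `v`. -/
noncomputable def bfsCodeFrom (v : V) : ℕ → ℕ → List (Layer V)
  | _, 0 => []
  | j, q + 1 => G.bfsLayer v j :: bfsCodeFrom v (j + 1) q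

variable {G}

theorem bfsLayer_hangsFrom [DecidableEq V] (v : V) (j : ℕ) :
    (G.bfsLayer v j).HangsFrom (G.sphere v j) := by
  intro u
  by_cases hu : u ∈ G.sphere v (j + 1)
  · simpa [bfsLayer, hu] using bfsParent_mem_sphere hu
  · simpa [bfsLayer, hu] using bfsParent_of_notMem hu

theorem bfsCodeFrom_mem_forestCodes [DecidableEq V] (v : V) (q : ℕ) :
    ∀ j, G.bfsCodeFrom v j q ∈ forestCodes q (G.sphere v j) := by
  induction q with
  | zero => simp [bfsCodeFrom, forestCodes]
  | succ q ih =>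
    intro j
    simp only [bfsCodeFrom, forestCodes, mem_biUnion, mem_filter,
      mem_univ, true_and, mem_image]
    exact ⟨_, bfsLayer_hangsFrom v j, _, ih (j + 1), rfl⟩

theorem mem_bfsCodeFrom {v : V} {l : Layer V} {q : ℕ} :
    ∀ {j}, l ∈ G.bfsCodeFrom v j q ↔ ∃ i < q, G.bfsLayer v (j + i) = l := by
  induction q with
  | zero => simp [bfsCodeFrom]
  | succ q ih =>
    intro j
    simp only [bfsCodeFrom, List.mem_cons, ih, Nat.exists_lt_succ_left, add_zero,
      eq_comm (a := l), add_right_comm j, add_assoc]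

theorem codeSize_bfsCodeFrom (v : V) (q : ℕ) :
    ∀ j, codeSize (G.bfsCodeFrom v j q) = ∑ i ∈ range q, #(G.sphere v (j + i + 1)) := by
  induction q with
  | zero => simp [bfsCodeFrom]
  | succ q ih =>
    intro j
    rw [bfsCodeFrom, codeSize_cons, ih, sum_range_succ']
    simp only [bfsLayer, add_zero, add_comm, add_left_comm]

theorem card_filter_edist_le [DecidableEq V] (v : V) (r : ℕ) :
    #{u | G.edist v u ≤ r} = 1 + codeSize (G.bfsCodeFrom v 0 r) := by
  have hball : ({u | G.edist v u ≤ r} : Finset V) = (range (r + 1)).biUnion (G.sphere v) := by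
    ext u
    simp only [mem_filter, mem_univ, true_and, mem_biUnion,
      mem_range, mem_sphere, Nat.lt_succ_iff, ENat.le_natCast_iff]
    grind
  rw [hball, card_biUnion fun i _ j _ hij => sphere_disjoint hij, sum_range_succ',
    codeSize_bfsCodeFrom]
  simp [add_comm]

theorem codeEdges_bfsCodeFrom_subset_edgeSet {v : V} {j q : ℕ} {e : Sym2 V}
    (he : e ∈ codeEdges (G.bfsCodeFrom v j q)) : e ∈ G.edgeSet := by
  obtain ⟨l, hl, u, hu, rfl⟩ := mem_codeEdges.1 he
  obtain ⟨i, -, rfl⟩ := mem_bfsCodeFrom.1 hl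
  exact (adj_bfsParent hu).symm

/-- Each non-root vertex is recovered from its tree edge as the endpoint farther from `v`. -/
theorem codeSize_bfsCodeFrom_le_card_codeEdges (v : V) (j q : ℕ) :
    codeSize (G.bfsCodeFrom v j q) ≤ #(codeEdges (G.bfsCodeFrom v j q)) := by
  rw [codeSize_bfsCodeFrom, ← card_sigma]
  refine card_le_card_of_injOn (fun x => s(x.2, G.bfsParent v (j + x.1) x.2)) ?_ ?_
  · rintro ⟨i, u⟩ hiu
    obtain ⟨hi, hu⟩ := mem_sigma.1 hiu
    exact mem_codeEdges.2 ⟨_, mem_bfsCodeFrom.2 ⟨i, mem_range.1 hi, rfl⟩, u, hu, rfl⟩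
  · rintro ⟨i, u⟩ hiu ⟨i', u'⟩ hiu' h
    simp only [coe_sigma, Set.mem_sigma_iff, mem_coe] at hiu hiu'
    have hu := mem_sphere.1 hiu.2
    have hu' := mem_sphere.1 hiu'.2
    have hp := mem_sphere.1 (bfsParent_mem_sphere hiu.2)
    have hp' := mem_sphere.1 (bfsParent_mem_sphere hiu'.2)
    rcases Sym2.eq_iff.1 h with ⟨rfl, -⟩ | ⟨h1, h2⟩ <;> dsimp only at *
    · have : i = i' := by
        have := hu.symm.trans hu'
        norm_cast at this
        omega
      subst this
      rfl
    · rw [h1, hp'] at hu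
      rw [← h2, hp] at hu'
      norm_cast at hu hu'
      omega

end SimpleGraph

theorem sum_prod_filter_forall_eq_true {I : Type*} [Fintype I] [DecidableEq I]
    (W : I → Bool → ℝ) (hW : ∀ i, W i true + W i false = 1) (F : Finset I) :
    ∑ E : I → Bool with ∀ i ∈ F, E i = true, ∏ i, W i (E i) = ∏ i ∈ F, W i true := by
  calc ∑ E : I → Bool with ∀ i ∈ F, E i = true, ∏ i, W i (E i)
      = ∑ E : I → Bool, ∏ i, (if i ∈ F ∧ E i = false then 0 else W i (E i)) := by
        rw [sum_filter]
        refine sum_congr rfl fun E _ => ?_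
        split_ifs with hE
        · refine prod_congr rfl fun i _ => ?_
          rw [if_neg]
          rintro ⟨hi, hEi⟩
          simp [hE i hi] at hEi
        · push Not at hE
          obtain ⟨i, hi, hEi⟩ := hE
          exact (prod_eq_zero (mem_univ i) (by simp [hi, hEi])).symm
    _ = ∏ i, ∑ b : Bool, (if i ∈ F ∧ b = false then 0 else W i b) :=
        (Fintype.prod_sum fun i (b : Bool) => if i ∈ F ∧ b = false then 0 else W i b).symm
    _ = ∏ i, (if i ∈ F then W i true else 1) := by
        refine prod_congr rfl fun i _ => ?_
        split_ifs with hi <;> simp [hi, hW]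
    _ = ∏ i ∈ F, W i true := by rw [prod_ite_mem, univ_inter]

section RandomGraph

variable {n : ℕ}

def EdgeIdx.toSym2 (p : EdgeIdx n) : Sym2 (Fin n) := s(p.1.1, p.1.2)

theorem EdgeIdx.toSym2_injective : Function.Injective (EdgeIdx.toSym2 (n := n)) := by
  rintro ⟨⟨x, y⟩, hxy⟩ ⟨⟨x', y'⟩, hxy'⟩ h
  rcases Sym2.eq_iff.1 h with ⟨rfl, rfl⟩ | ⟨rfl, rfl⟩
  · rfl
  · exact absurd hxy (lt_asymm hxy')

theorem EdgeIdx.card_preimage_toSym2 (F : Finset (Sym2 (Fin n))) (hF : ∀ e ∈ F, ¬e.IsDiag) :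
    #(F.preimage EdgeIdx.toSym2 EdgeIdx.toSym2_injective.injOn) = #F := by
  rw [card_preimage, filter_true_of_mem]
  intro e he
  induction e using Sym2.ind with
  | h x y =>
    rcases lt_or_gt_of_ne (hF _ he) with hxy | hxy
    · exact ⟨⟨(x, y), hxy⟩, rfl⟩
    · exact ⟨⟨(y, x), hxy⟩, Sym2.eq_swap⟩

theorem eq_true_of_toSym2_mem_edgeSet {E : EdgeIdx n → Bool} {σ : Equiv.Perm (Fin n)} {t : ℕ}
    {p : EdgeIdx n} (h : p.toSym2 ∈ (graphAt E σ t).edgeSet) : E p = true := by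
  obtain ⟨-, -, -, q, hq, hqp⟩ := h
  rwa [(EdgeIdx.toSym2_injective (Sym2.eq_iff.2 hqp) : q = p)] at hq

theorem card_ballFinset (E : EdgeIdx n → Bool) (σ : Equiv.Perm (Fin n)) (t r : ℕ) (v : Fin n) :
    #(ballFinset E σ t r v) = 1 + codeSize ((graphAt E σ t).bfsCodeFrom v 0 r) := by
  rw [← SimpleGraph.card_filter_edist_le]
  congr 1
  ext u
  simp [ballFinset, ballSet, SimpleGraph.reachable_and_dist_le_iff]

end RandomGraph

section EdgeWeights

variable {n : ℕ} (σ : Equiv.Perm (Fin n)) (v : Fin n) (r : ℕ) {W : EdgeIdx n → Bool → ℝ}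
  {p₀ : ℝ} (hW₀ : ∀ p b, 0 ≤ W p b) (hW₁ : ∀ p, W p true + W p false = 1)
  (hp₀ : 0 ≤ p₀) (hp₁ : p₀ ≤ 1) (hW : ∀ p, W p true ≤ p₀)
include hW₀ hW₁ hp₀ hp₁ hW

/-- Every edge of the BFS tree must be present, and there are `codeSize w` of them. -/
theorem sum_prod_filter_bfsCode_eq_le (w : List (Layer (Fin n))) :
    ∑ E : EdgeIdx n → Bool with (graphAt E σ n).bfsCodeFrom v 0 r = w, ∏ p, W p (E p)
      ≤ p₀ ^ codeSize w := by
  rcases eq_empty_or_nonempty {E : EdgeIdx n → Bool | (graphAt E σ n).bfsCodeFrom v 0 r = w}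
    with hempty | ⟨E₀, hE₀⟩
  · rw [hempty, sum_empty]
    positivity
  rw [mem_filter] at hE₀
  set F := (codeEdges w).preimage EdgeIdx.toSym2 EdgeIdx.toSym2_injective.injOn
  have hF : codeSize w ≤ #F := by
    rw [EdgeIdx.card_preimage_toSym2, ← hE₀.2]
    · exact SimpleGraph.codeSize_bfsCodeFrom_le_card_codeEdges v 0 r
    · intro e he
      rw [← hE₀.2] at he
      exact SimpleGraph.not_isDiag_of_mem_edgeSet _
        (SimpleGraph.codeEdges_bfsCodeFrom_subset_edgeSet he)
  have hsub : ({E | (graphAt E σ n).bfsCodeFrom v 0 r = w} : Finset (EdgeIdx n → Bool)) ⊆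
      ({E | ∀ p ∈ F, E p = true} : Finset (EdgeIdx n → Bool)) := by
    intro E hE
    simp only [mem_filter, mem_univ, true_and, F, mem_preimage] at hE ⊢
    intro p hp
    rw [← hE] at hp
    exact eq_true_of_toSym2_mem_edgeSet (SimpleGraph.codeEdges_bfsCodeFrom_subset_edgeSet hp)
  calc ∑ E : EdgeIdx n → Bool with (graphAt E σ n).bfsCodeFrom v 0 r = w, ∏ p, W p (E p)
      ≤ ∑ E : EdgeIdx n → Bool with ∀ p ∈ F, E p = true, ∏ p, W p (E p) :=
        sum_le_sum_of_subset_of_nonneg hsub fun E _ _ => prod_nonneg fun p _ => hW₀ p (E p)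
    _ = ∏ p ∈ F, W p true := sum_prod_filter_forall_eq_true W hW₁ F
    _ ≤ ∏ _p ∈ F, p₀ := prod_le_prod (fun p _ => hW₀ p true) fun p _ => hW p
    _ = p₀ ^ #F := prod_const p₀
    _ ≤ p₀ ^ codeSize w := pow_le_pow_of_le_one hp₀ hp₁ hF

theorem sum_prod_mul_exp_card_ballFinset_le (t : ℝ) :
    ∑ E : EdgeIdx n → Bool, (∏ p, W p (E p)) * Real.exp (t * #(ballFinset E σ n r v))
      ≤ Real.exp t * tower (n * (Real.exp t * p₀)) r := by
  have hcode : ∀ E ∈ (univ : Finset (EdgeIdx n → Bool)),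
      (graphAt E σ n).bfsCodeFrom v 0 r ∈ forestCodes r {v} := fun E _ => by
    simpa using SimpleGraph.bfsCodeFrom_mem_forestCodes (G := graphAt E σ n) v r 0
  rw [← sum_fiberwise_of_maps_to hcode]
  calc ∑ w ∈ forestCodes r {v},
        ∑ E : EdgeIdx n → Bool with (graphAt E σ n).bfsCodeFrom v 0 r = w,
          (∏ p, W p (E p)) * Real.exp (t * #(ballFinset E σ n r v))
      = ∑ w ∈ forestCodes r {v}, Real.exp (t * (1 + codeSize w : ℕ)) *
          ∑ E : EdgeIdx n → Bool with (graphAt E σ n).bfsCodeFrom v 0 r = w,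
            ∏ p, W p (E p) := by
        refine sum_congr rfl fun w _ => ?_
        rw [mul_sum]
        refine sum_congr rfl fun E hE => ?_
        rw [card_ballFinset, (mem_filter.1 hE).2, mul_comm]
    _ ≤ ∑ w ∈ forestCodes r {v}, Real.exp (t * (1 + codeSize w : ℕ)) * p₀ ^ codeSize w := by
        gcongr with w
        exact sum_prod_filter_bfsCode_eq_le σ v r hW₀ hW₁ hp₀ hp₁ hW w
    _ = Real.exp t * ∑ w ∈ forestCodes r {v}, (Real.exp t * p₀) ^ codeSize w := by
        rw [mul_sum]
        refine sum_congr rfl fun w _ => ?_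
        rw [Nat.cast_add, Nat.cast_one, mul_add, mul_one, Real.exp_add, mul_comm t,
          Real.exp_nat_mul, mul_pow]
        ring
    _ ≤ Real.exp t * tower (n * (Real.exp t * p₀)) r := by
        gcongr
        simpa using sum_pow_codeSize_le (by positivity) (by simp) r {v}

end EdgeWeights

section StSSBM

variable {n k : ℕ} {a b : ℝ}

theorem edgeP_nonneg (ha : 0 ≤ a) (hb : 0 ≤ b) (τ : Fin n → Fin k) (p : EdgeIdx n) :
    0 ≤ edgeP k a b τ p := by
  unfold edgeP
  split_ifs <;> positivity

theorem edgeP_le_max_div (τ : Fin n → Fin k) (p : EdgeIdx n) :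
    edgeP k a b τ p ≤ max a b / n := by
  unfold edgeP
  split_ifs
  · exact div_le_div_of_nonneg_right (le_max_left a b) n.cast_nonneg
  · exact div_le_div_of_nonneg_right (le_max_right a b) n.cast_nonneg

theorem edgeWeight_nonneg (ha : 0 ≤ a) (hb : 0 ≤ b) (hn : max a b ≤ n) (τ : Fin n → Fin k)
    (p : EdgeIdx n) (e : Bool) :
    0 ≤ if e then edgeP k a b τ p else 1 - edgeP k a b τ p := by
  have := edgeP_nonneg ha hb τ p
  have := (edgeP_le_max_div τ p).trans (div_le_one_of_le₀ hn n.cast_nonneg)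
  split_ifs <;> linarith

theorem density_nonneg (ha : 0 ≤ a) (hb : 0 ≤ b) (hn : max a b ≤ n) (c : Config n k) :
    0 ≤ density k a b c :=
  mul_nonneg (by positivity) (prod_nonneg fun p _ => edgeWeight_nonneg ha hb hn c.1 p _)

theorem sum_density_mul_le (f : Config n k → ℝ) {K : ℝ} (hK : 0 ≤ K)
    (hf : ∀ τ σ, ∑ E : EdgeIdx n → Bool,
      (∏ p, if E p then edgeP k a b τ p else 1 - edgeP k a b τ p) * f (τ, E, σ) ≤ K) :
    ∑ c, density k a b c * f c ≤ K := by
  set Z : ℝ := 1 / (k : ℝ) ^ n * (1 / (n.factorial : ℝ))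
  calc ∑ c, density k a b c * f c
      = Z * ∑ τ : Fin n → Fin k, ∑ σ : Equiv.Perm (Fin n), ∑ E : EdgeIdx n → Bool,
          (∏ p, if E p then edgeP k a b τ p else 1 - edgeP k a b τ p) * f (τ, E, σ) := by
        simp only [Fintype.sum_prod_type, mul_sum]
        refine sum_congr rfl fun τ _ => ?_
        rw [sum_comm]
        simp only [density, Z]
        exact sum_congr rfl fun _ _ => sum_congr rfl fun _ _ => by ring
    _ ≤ Z * ∑ _τ : Fin n → Fin k, ∑ _σ : Equiv.Perm (Fin n), K := by
        gcongr with τ _ σ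
        exact hf τ σ
    _ = ((k : ℝ) ^ n / (k : ℝ) ^ n) * ((n.factorial : ℝ) / n.factorial) * K := by
        simp only [sum_const, card_univ, Fintype.card_fun, Fintype.card_perm, Fintype.card_fin,
          nsmul_eq_mul, Z]
        push_cast
        ring
    _ ≤ K := by
        rw [div_self (by positivity : (n.factorial : ℝ) ≠ 0), mul_one]
        exact mul_le_of_le_one_left hK (div_self_le_one _)

theorem sum_density_mul_exp_card_ballFinset_le (ha : 0 ≤ a) (hb : 0 ≤ b) (hn : max a b ≤ n)
    (v : Fin n) (r : ℕ) (t : ℝ) :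
    ∑ c : Config n k, density k a b c * Real.exp (t * #(ballFinset c.2.1 c.2.2 n r v))
      ≤ Real.exp t * tower (max a b * Real.exp t) r := by
  have hn₀ : (n : ℝ) ≠ 0 := by exact_mod_cast (Fin.pos v).ne'
  refine sum_density_mul_le _ (mul_nonneg (Real.exp_pos t).le (tower_nonneg _ r)) fun τ σ => ?_
  calc _ ≤ Real.exp t * tower (n * (Real.exp t * (max a b / n))) r :=
        sum_prod_mul_exp_card_ballFinset_le σ v r (edgeWeight_nonneg ha hb hn τ)
          (fun p => by simp) (by positivity) (div_le_one_of_le₀ hn n.cast_nonneg)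
          (edgeP_le_max_div τ) t
    _ = Real.exp t * tower (max a b * Real.exp t) r := by
        congr 2
        field_simp

end StSSBM

theorem pow_le_factorial_div_pow_mul_exp {t x : ℝ} (ht : 0 < t) (hx : 0 ≤ x) (m : ℕ) :
    x ^ m ≤ m.factorial / t ^ m * Real.exp (t * x) := by
  have h := Real.pow_div_factorial_le_exp (t * x) (mul_nonneg ht.le hx) m
  rw [mul_pow, div_le_iff₀ (by positivity)] at h
  rw [div_mul_eq_mul_div, le_div_iff₀ (by positivity)]
  linarith

theorem pow_succ_div_factorial_mul_sum_le {ι : Type*} [Fintype ι] {d X : ι → ℝ}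
    (hd : ∀ i, 0 ≤ d i) (hX : ∀ i, 0 ≤ X i) {s K : ℝ} (hs : 0 < s)
    (hK : ∑ i, d i * Real.exp (2 * s * X i) ≤ K) (m : ℕ) :
    s ^ (m + 1) / m.factorial * ∑ i, d i * X i ^ (m + 1)
      ≤ K * ((m + 1) * (1 / 2) ^ (m + 1)) := by
  have hc : s ^ (m + 1) / m.factorial * ((m + 1).factorial / (2 * s) ^ (m + 1))
      = (m + 1) * (1 / 2) ^ (m + 1) := by
    rw [Nat.factorial_succ, mul_pow]
    push_cast
    field_simp
    rw [← mul_pow]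
    norm_num
  calc s ^ (m + 1) / m.factorial * ∑ i, d i * X i ^ (m + 1)
      ≤ s ^ (m + 1) / m.factorial *
          ∑ i, d i * ((m + 1).factorial / (2 * s) ^ (m + 1) * Real.exp (2 * s * X i)) := by
        gcongr with i
        · exact hd i
        · exact pow_le_factorial_div_pow_mul_exp (by positivity) (hX i) (m + 1)
    _ = (m + 1) * (1 / 2) ^ (m + 1) * ∑ i, d i * Real.exp (2 * s * X i) := by
        rw [← hc, mul_assoc, mul_sum, mul_sum, mul_sum]
        exact sum_congr rfl fun i _ => by ring
    _ ≤ K * ((m + 1) * (1 / 2) ^ (m + 1)) := by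
        rw [mul_comm K]
        gcongr

open scoped ENNReal in
theorem ball_moments_bounded_general
    (k : ℕ) (a b : ℝ) (ha : 0 ≤ a) (hb : 0 ≤ b)
    (R : ℕ) (L C : ℝ) (hL : 0 < L) (hC : 0 < C)
    (v : (N : ℕ) → Fin (N + 1)) :
    Filter.limsup
      (fun n : ℕ =>
        ∑' m : ℕ,
          ENNReal.ofReal ((2 * L * C) ^ (m + 1) / (Nat.factorial m : ℝ)) *
            ENNReal.ofReal
              (∑ c : Config (n + 1) k, density k a b c *
                ((ballFinset c.2.1 c.2.2 (n + 1) (2 * R) (v n)).card : ℝ) ^ (m + 1)))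
      Filter.atTop < ⊤ := by
  have hs : 0 < 2 * L * C := by positivity
  set t := 2 * (2 * L * C)
  set K := Real.exp t * tower (max a b * Real.exp t) (2 * R)
  have hK : 0 ≤ K := mul_nonneg (Real.exp_pos t).le (tower_nonneg _ _)
  have hsum : Summable fun m : ℕ => K * ((m + 1) * (1 / 2 : ℝ) ^ (m + 1)) := by
    refine Summable.mul_left K ?_
    have := (summable_nat_add_iff 1).2
      (summable_pow_mul_geometric_of_norm_lt_one 1 (r := (1 / 2 : ℝ)) (by norm_num))
    simpa using this
  refine (Filter.limsup_le_of_le (by isBoundedDefault) ?_).trans_lt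
    ((ENNReal.ofReal_tsum_of_nonneg (fun m => mul_nonneg hK (by positivity)) hsum).symm.trans_lt
      ENNReal.ofReal_lt_top)
  filter_upwards [Filter.eventually_ge_atTop ⌈max a b⌉₊] with n hn
  have hmax : max a b ≤ (n + 1 : ℕ) :=
    (Nat.le_ceil _).trans (by exact_mod_cast hn.trans n.le_succ)
  refine ENNReal.tsum_le_tsum fun m => ?_
  rw [← ENNReal.ofReal_mul (by positivity)]
  exact ENNReal.ofReal_le_ofReal <| pow_succ_div_factorial_mul_sum_le
    (density_nonneg ha hb hmax) (fun c => Nat.cast_nonneg _) hs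
    (sum_density_mul_exp_card_ballFinset_le ha hb hmax (v n) (2 * R) t) m

open scoped ENNReal in
/-- **Uniform control of the exponential moments of ball sizes (Lemma 6).**
Let `G(N)` be the graph of `StSSBM(N,k,a,b)` (here `N = n+1` so that the distinguished
vertex `v N` exists for every `n`), fix `R ≥ 1` and constants `L, C > 0`.  Then
`limsup_{n→∞} Σ_{m=1}^∞ (2^m L^m C^m / (m−1)!) · E[|V_{2R}^n(v)|^m] < ∞`. -/
theorem ball_moments_bounded
    (k : ℕ) (hk : 0 < k) (a b : ℝ) (ha : 0 ≤ a) (hb : 0 ≤ b)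
    (R : ℕ) (hR : 0 < R) (L C : ℝ) (hL : 0 < L) (hC : 0 < C)
    (v : (N : ℕ) → Fin (N + 1)) :
    Filter.limsup
      (fun n : ℕ =>
        ∑' m : ℕ,
          ENNReal.ofReal ((2 * L * C) ^ (m + 1) / (Nat.factorial m : ℝ)) *
            ENNReal.ofReal
              (∑ c : Config (n + 1) k, density k a b c *
                ((ballFinset c.2.1 c.2.2 (n + 1) (2 * R) (v n)).card : ℝ) ^ (m + 1)))
      Filter.atTop < ⊤ :=
  ball_moments_bounded_general k a b ha hb R L C hL hC v
end

section
/- For every integer R ≥ 1 and all reals C ≥ 1 and d ≥ 1, lim_{r→∞} Σ_{l=⌊r/(2R)⌋}^{r} binom(r, l) · (C^l / l!) · d^r = 0, where the limit is over positive integers r and binom(r, l) is the binomial coefficient. -/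
/-!
Since `l! ≥ m!` for `l ≥ m`, the binomial theorem bounds the absolute value of the sum by
`((|C| + 1) |d|)^r / m!` with `m = ⌊r/(2R)⌋`. As `r < 2R (m + 1)`, this is at most
`B^{2R} · (B^{2R})^m / m!` for `B = max 1 ((|C| + 1) |d|)`, and `x^m / m! → 0` as `m → ∞`.
-/

open Filter Finset Nat

theorem sum_Icc_choose_mul_pow_div_factorial_le {x : ℝ} (hx : 0 ≤ x) (m r : ℕ) :
    ∑ l ∈ Icc m r, (r.choose l : ℝ) * (x ^ l / l !) ≤ (x + 1) ^ r / m ! := by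
  calc ∑ l ∈ Icc m r, (r.choose l : ℝ) * (x ^ l / l !)
      ≤ ∑ l ∈ Icc m r, x ^ l * (r.choose l : ℝ) / m ! := by
        refine sum_le_sum fun l hl => ?_
        rw [mul_div_assoc', mul_comm]
        gcongr
        exact (mem_Icc.1 hl).1
    _ ≤ ∑ l ∈ range (r + 1), x ^ l * (r.choose l : ℝ) / m ! := by
        refine sum_le_sum_of_subset_of_nonneg (fun l hl => ?_) fun _ _ _ => by positivity
        simpa [Nat.lt_succ_iff] using (mem_Icc.1 hl).2
    _ = (x + 1) ^ r / m ! := by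
        simp [add_pow, sum_div]

theorem norm_sum_Icc_choose_mul_pow_div_factorial_mul_pow_le (C d : ℝ) (m r : ℕ) :
    ‖∑ l ∈ Icc m r, (r.choose l : ℝ) * (C ^ l / l !) * d ^ r‖
      ≤ ((|C| + 1) * |d|) ^ r / m ! := by
  calc ‖∑ l ∈ Icc m r, (r.choose l : ℝ) * (C ^ l / l !) * d ^ r‖
      = |∑ l ∈ Icc m r, (r.choose l : ℝ) * (C ^ l / l !)| * |d| ^ r := by
        rw [← sum_mul, Real.norm_eq_abs, abs_mul, abs_pow]
    _ ≤ (∑ l ∈ Icc m r, (r.choose l : ℝ) * (|C| ^ l / l !)) * |d| ^ r := by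
        gcongr
        refine (abs_sum_le_sum_abs _ _).trans_eq (sum_congr rfl fun l _ => ?_)
        simp [abs_mul, abs_div, abs_pow]
    _ ≤ (|C| + 1) ^ r / m ! * |d| ^ r := by
        gcongr
        exact sum_Icc_choose_mul_pow_div_factorial_le (abs_nonneg C) m r
    _ = ((|C| + 1) * |d|) ^ r / m ! := by rw [mul_pow]; ring

theorem tendsto_pow_div_factorial_div_atTop (a : ℝ) {k : ℕ} (hk : 0 < k) :
    Tendsto (fun r : ℕ => a ^ r / (r / k) !) atTop (nhds 0) := by
  set B := max 1 |a|
  have hB : 1 ≤ B := le_max_left _ _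
  have hbound (r : ℕ) : ‖a ^ r / ((r / k) !)‖ ≤ B ^ k * ((B ^ k) ^ (r / k) / (r / k) !) := by
    have hpow : |a| ^ r ≤ B ^ (k * (r / k + 1)) :=
      calc |a| ^ r ≤ B ^ r := by gcongr; exact le_max_right _ _
        _ ≤ B ^ (k * (r / k + 1)) := pow_le_pow_right₀ hB (Nat.lt_mul_div_succ r hk).le
    rw [norm_div, norm_pow, Real.norm_eq_abs, RCLike.norm_natCast, mul_div_assoc', ← pow_mul,
      ← pow_add, add_comm k, ← mul_add_one]
    gcongr
  refine squeeze_zero_norm hbound ?_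
  simpa using ((FloorSemiring.tendsto_pow_div_factorial_atTop (B ^ k)).comp
    (Nat.tendsto_div_const_atTop hk.ne')).const_mul (B ^ k)

theorem sum_binom_factorial_tendsto_zero_general (R : ℕ) (hR : 1 ≤ R) (C d : ℝ) :
    Tendsto (fun r : ℕ =>
        ∑ l ∈ Finset.Icc (r / (2 * R)) r,
          (r.choose l : ℝ) * (C ^ l / (Nat.factorial l : ℝ)) * d ^ r)
      atTop (nhds 0) :=
  squeeze_zero_norm (fun r => norm_sum_Icc_choose_mul_pow_div_factorial_mul_pow_le C d _ r)
    (tendsto_pow_div_factorial_div_atTop _ (by omega))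

/-- For every integer `R ≥ 1` and reals `C ≥ 1`, `d ≥ 1`,
`Σ_{l=⌊r/(2R)⌋}^{r} binom(r,l) · C^l / l! · d^r → 0` as the integer `r → ∞`. -/
theorem sum_binom_factorial_tendsto_zero (R : ℕ) (hR : 1 ≤ R) (C d : ℝ)
    (hC : 1 ≤ C) (hd : 1 ≤ d) :
    Tendsto (fun r : ℕ =>
        ∑ l ∈ Finset.Icc (r / (2 * R)) r,
          (r.choose l : ℝ) * (C ^ l / (Nat.factorial l : ℝ)) * d ^ r)
      atTop (nhds 0) :=
  sum_binom_factorial_tendsto_zero_general R hR C d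
end
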